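/- arXiv:1811.01569 — 5 statements merged into one kernel-verified Lean document; each statement's English description precedes it below -/
import Mathlib

section
/- Let $\sigma : N \to \mathbb{R}_{\geq 0}$ be nonnegative weights on a finite set $N$. The set function $g(S) = \sqrt{\sum_{j \in S} \sigma_j^2}$ is submodular: for all $S \subseteq T \subseteq N$ and $j \notin T$, $g(T \cup \{j\}) - g(T) \leq g(S \cup \{j\}) - g(S)$. -/
lemma sqrt_diff_mono (a s t : ℝ) (ha : 0 ≤ a) (hs : 0 ≤ s) (hst : s ≤ t) :
    Real.sqrt (a + t) - Real.sqrt t ≤ Real.sqrt (a + s) - Real.sqrt s := by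
  have ht : (0:ℝ) ≤ t := hs.trans hst
  have h1 := Real.sq_sqrt (by linarith : (0:ℝ) ≤ a + t)
  have h2 := Real.sq_sqrt (by linarith : (0:ℝ) ≤ a + s)
  have h3 := Real.sq_sqrt hs
  have h4 := Real.sq_sqrt ht
  have n1 := Real.sqrt_nonneg (a + t)
  have n2 := Real.sqrt_nonneg (a + s)
  have n3 := Real.sqrt_nonneg s
  have n4 := Real.sqrt_nonneg t
  have m1 : Real.sqrt s ≤ Real.sqrt t := Real.sqrt_le_sqrt hst
  have m2 : Real.sqrt (a + s) ≤ Real.sqrt (a + t) := Real.sqrt_le_sqrt (by linarith)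
  have m3 : Real.sqrt s ≤ Real.sqrt (a + s) := Real.sqrt_le_sqrt (by linarith)
  nlinarith [mul_nonneg n1 n3, mul_nonneg n2 n4, mul_nonneg n1 n4, mul_nonneg n2 n3,
    sq_nonneg (Real.sqrt (a+t) - Real.sqrt (a+s)), sq_nonneg (Real.sqrt t - Real.sqrt s)]

theorem sqrt_sum_sq_submodular (n : ℕ) (σ : Fin n → ℝ) (hσ : ∀ j, 0 ≤ σ j)
    (S T : Finset (Fin n)) (hST : S ⊆ T) (j : Fin n) (hj : j ∉ T) :
    Real.sqrt (∑ i ∈ insert j T, σ i ^ 2) - Real.sqrt (∑ i ∈ T, σ i ^ 2) ≤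
      Real.sqrt (∑ i ∈ insert j S, σ i ^ 2) - Real.sqrt (∑ i ∈ S, σ i ^ 2) := by
  have hjS : j ∉ S := fun h => hj (hST h)
  rw [Finset.sum_insert hj, Finset.sum_insert hjS]
  exact sqrt_diff_mono (σ j ^ 2) _ _ (sq_nonneg _)
    (Finset.sum_nonneg fun i _ => sq_nonneg _)
    (Finset.sum_le_sum_of_subset_of_nonneg hST fun i _ _ => sq_nonneg _)
end

section
/- Let $\bar{a}, \sigma : N \to \mathbb{R}_{\geq 0}$ and $c \geq 0$. The set function $f(S) = \sum_{j \in S} \bar{a}_j + c \sqrt{\sum_{j \in S} \sigma_j^2}$ is submodular and monotone nondecreasing on subsets of the finite set $N$. -/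
lemma sqrt_diff_le (x y d : ℝ) (hy : 0 ≤ y) (hxy : y ≤ x) (hd : 0 ≤ d) :
    Real.sqrt (x + d) - Real.sqrt x ≤ Real.sqrt (y + d) - Real.sqrt y := by
  have hx : 0 ≤ x := hy.trans hxy
  have h1 := Real.sq_sqrt (by linarith : (0:ℝ) ≤ x + d)
  have h2 := Real.sq_sqrt hx
  have h3 := Real.sq_sqrt (by linarith : (0:ℝ) ≤ y + d)
  have h4 := Real.sq_sqrt hy
  have n1 := Real.sqrt_nonneg (x + d)
  have n2 := Real.sqrt_nonneg x
  have n3 := Real.sqrt_nonneg (y + d)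
  have n4 := Real.sqrt_nonneg y
  have m1 : Real.sqrt y ≤ Real.sqrt x := Real.sqrt_le_sqrt hxy
  have m2 : Real.sqrt x ≤ Real.sqrt (x + d) := Real.sqrt_le_sqrt (by linarith)
  have m3 : Real.sqrt y ≤ Real.sqrt (y + d) := Real.sqrt_le_sqrt (by linarith)
  have m4 : Real.sqrt (y + d) ≤ Real.sqrt (x + d) := Real.sqrt_le_sqrt (by linarith)
  nlinarith [sq_nonneg (Real.sqrt (x+d) - Real.sqrt x), sq_nonneg (Real.sqrt (y+d) - Real.sqrt y),
    sq_nonneg (Real.sqrt (x+d) + Real.sqrt y - Real.sqrt (y+d) - Real.sqrt x),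
    mul_nonneg (sub_nonneg.2 m4) (sub_nonneg.2 m1),
    mul_nonneg (sub_nonneg.2 m2) (sub_nonneg.2 m3)]

theorem knapsack_set_function_submodular_monotone (n : ℕ) (abar σ : Fin n → ℝ) (c : ℝ)
    (ha : ∀ j, 0 ≤ abar j) (hσ : ∀ j, 0 ≤ σ j) (hc : 0 ≤ c) :
    (∀ S T : Finset (Fin n), S ⊆ T → ∀ j ∉ T,
      ((∑ i ∈ insert j T, abar i) + c * Real.sqrt (∑ i ∈ insert j T, σ i ^ 2)) -
        ((∑ i ∈ T, abar i) + c * Real.sqrt (∑ i ∈ T, σ i ^ 2)) ≤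
      ((∑ i ∈ insert j S, abar i) + c * Real.sqrt (∑ i ∈ insert j S, σ i ^ 2)) -
        ((∑ i ∈ S, abar i) + c * Real.sqrt (∑ i ∈ S, σ i ^ 2))) ∧
    (∀ S T : Finset (Fin n), S ⊆ T →
      (∑ i ∈ S, abar i) + c * Real.sqrt (∑ i ∈ S, σ i ^ 2) ≤
        (∑ i ∈ T, abar i) + c * Real.sqrt (∑ i ∈ T, σ i ^ 2)) := by
  have hsum : ∀ S T : Finset (Fin n), S ⊆ T → (∑ i ∈ S, σ i ^ 2) ≤ ∑ i ∈ T, σ i ^ 2 :=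
    fun S T h => Finset.sum_le_sum_of_subset_of_nonneg h (fun i _ _ => sq_nonneg _)
  have hnn : ∀ S : Finset (Fin n), (0:ℝ) ≤ ∑ i ∈ S, σ i ^ 2 :=
    fun S => Finset.sum_nonneg (fun i _ => sq_nonneg _)
  constructor
  · intro S T hST j hjT
    have hjS : j ∉ S := fun h => hjT (hST h)
    rw [Finset.sum_insert hjT, Finset.sum_insert hjS, Finset.sum_insert hjT,
      Finset.sum_insert hjS]
    have key := sqrt_diff_le (∑ i ∈ T, σ i ^ 2) (∑ i ∈ S, σ i ^ 2) (σ j ^ 2)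
      (hnn S) (hsum S T hST) (sq_nonneg _)
    simp only [add_comm (σ j ^ 2)]
    nlinarith [mul_le_mul_of_nonneg_left key hc]
  · intro S T hST
    have h1 : (∑ i ∈ S, abar i) ≤ ∑ i ∈ T, abar i :=
      Finset.sum_le_sum_of_subset_of_nonneg hST (fun i _ _ => ha i)
    have h2 : Real.sqrt (∑ i ∈ S, σ i ^ 2) ≤ Real.sqrt (∑ i ∈ T, σ i ^ 2) :=
      Real.sqrt_le_sqrt (hsum S T hST)
    nlinarith [mul_le_mul_of_nonneg_left h2 hc]
end

section
/- Let $f(S) = \sum_{j \in S} \bar{a}_j + c\sqrt{\sum_{j \in S}\sigma_j^2}$ with $\bar{a}_j, \sigma_j \geq 0$ and $c \geq 0$, and let $\Pi_f = \{\pi \in \mathbb{R}^n : \sum_{j \in S} \pi_j \leq f(S) \text{ for all } S \subseteq N\}$. Then a binary vector $x \in \{0,1\}^n$ satisfies $\sum_{j} \bar{a}_j x_j + c\sqrt{\sum_j \sigma_j^2 x_j^2} \leq b$ if and only if $\sum_j \pi_j x_j \leq b$ for every $\pi \in \Pi_f$. -/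
theorem ckp_iff_submodular_polyhedron (n : ℕ) (abar σ : Fin n → ℝ) (c b : ℝ)
    (ha : ∀ j, 0 ≤ abar j) (hσ : ∀ j, 0 ≤ σ j) (hc : 0 ≤ c)
    (x : Fin n → ℝ) (hx : ∀ j, x j = 0 ∨ x j = 1) :
    ((∑ j, abar j * x j) + c * Real.sqrt (∑ j, σ j ^ 2 * x j ^ 2) ≤ b) ↔
      (∀ π : Fin n → ℝ,
        (∀ S : Finset (Fin n),
          ∑ j ∈ S, π j ≤ (∑ j ∈ S, abar j) + c * Real.sqrt (∑ j ∈ S, σ j ^ 2)) →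
        ∑ j, π j * x j ≤ b) := by
  have hx01 : ∀ j, 0 ≤ x j ∧ x j ≤ 1 := by
    intro j; rcases hx j with h | h <;> rw [h] <;> constructor <;> norm_num
  have hx2 : ∀ j, x j ^ 2 = x j := by
    intro j; rcases hx j with h | h <;> rw [h] <;> ring
  set S : Finset (Fin n) := Finset.univ.filter (fun j => x j = 1) with hS
  have hsum : ∀ g : Fin n → ℝ, ∑ j, g j * x j = ∑ j ∈ S, g j := by
    intro g
    rw [hS, Finset.sum_filter]
    apply Finset.sum_congr rfl
    intro j _
    rcases hx j with h | h <;> simp [h]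
  have hQ : (∑ j, σ j ^ 2 * x j ^ 2) = ∑ j ∈ S, σ j ^ 2 := by
    rw [← hsum]; apply Finset.sum_congr rfl; intro j _; rw [hx2]
  set Q : ℝ := ∑ j ∈ S, σ j ^ 2 with hQdef
  have hQ0 : 0 ≤ Q := Finset.sum_nonneg fun j _ => sq_nonneg _
  constructor
  · intro hb π hπ
    calc ∑ j, π j * x j = ∑ j ∈ S, π j := hsum π
      _ ≤ (∑ j ∈ S, abar j) + c * Real.sqrt Q := hπ S
      _ = (∑ j, abar j * x j) + c * Real.sqrt (∑ j, σ j ^ 2 * x j ^ 2) := by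
          rw [hsum, hQ]
      _ ≤ b := hb
  · intro h
    set π : Fin n → ℝ := fun j => abar j * x j + c * (σ j ^ 2 * x j) / Real.sqrt Q
      with hπdef
    have hconstraint : ∀ T : Finset (Fin n),
        ∑ j ∈ T, π j ≤ (∑ j ∈ T, abar j) + c * Real.sqrt (∑ j ∈ T, σ j ^ 2) := by
      intro T
      have hsplit : ∑ j ∈ T, π j
          = (∑ j ∈ T, abar j * x j) + c * ((∑ j ∈ T, σ j ^ 2 * x j) / Real.sqrt Q) := by
        rw [hπdef]
        rw [Finset.sum_add_distrib]
        congr 1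
        rw [← Finset.sum_div, ← Finset.mul_sum, mul_div_assoc]
      set aT : ℝ := ∑ j ∈ T, σ j ^ 2 * x j with haT
      have haT0 : 0 ≤ aT :=
        Finset.sum_nonneg fun j _ => mul_nonneg (sq_nonneg _) (hx01 j).1
      have haTQ : aT ≤ Q := by
        have : aT = ∑ j ∈ T.filter (fun j => x j = 1), σ j ^ 2 := by
          rw [haT, Finset.sum_filter]
          apply Finset.sum_congr rfl
          intro j _
          rcases hx j with hj | hj <;> simp [hj]
        rw [this, hQdef, hS]
        apply Finset.sum_le_sum_of_subset_of_nonneg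
        · intro j hj
          simp only [Finset.mem_filter] at *
          exact ⟨Finset.mem_univ j, hj.2⟩
        · intro j _ _; exact sq_nonneg _
      have haTT : aT ≤ ∑ j ∈ T, σ j ^ 2 := by
        apply Finset.sum_le_sum
        intro j _
        nlinarith [sq_nonneg (σ j), (hx01 j).1, (hx01 j).2]
      have hdiv : aT / Real.sqrt Q ≤ Real.sqrt (∑ j ∈ T, σ j ^ 2) := by
        rcases eq_or_lt_of_le hQ0 with hQz | hQpos
        · have : aT = 0 := le_antisymm (by linarith) haT0
          rw [this, zero_div]
          exact Real.sqrt_nonneg _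
        · have hsQ : 0 < Real.sqrt Q := Real.sqrt_pos.mpr hQpos
          rw [div_le_iff₀ hsQ]
          calc aT = Real.sqrt aT * Real.sqrt aT := (Real.mul_self_sqrt haT0).symm
            _ ≤ Real.sqrt (∑ j ∈ T, σ j ^ 2) * Real.sqrt Q := by
                apply mul_le_mul (Real.sqrt_le_sqrt haTT) (Real.sqrt_le_sqrt haTQ)
                  (Real.sqrt_nonneg _) (Real.sqrt_nonneg _)
      have habar : ∑ j ∈ T, abar j * x j ≤ ∑ j ∈ T, abar j := by
        apply Finset.sum_le_sum
        intro j _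
        nlinarith [ha j, (hx01 j).1, (hx01 j).2]
      rw [hsplit]
      have := mul_le_mul_of_nonneg_left hdiv hc
      linarith
    have key := h π hconstraint
    have heval : ∑ j, π j * x j
        = (∑ j, abar j * x j) + c * Real.sqrt (∑ j, σ j ^ 2 * x j ^ 2) := by
      have hexp : ∀ j, π j * x j = abar j * x j + c * (σ j ^ 2 * x j) / Real.sqrt Q := by
        intro j
        rcases hx j with hj | hj <;> simp [hπdef, hj]
      rw [Finset.sum_congr rfl (fun j _ => hexp j), Finset.sum_add_distrib]
      congr 1
      rw [hQ, ← Finset.sum_div, ← Finset.mul_sum, hsum (fun j => σ j ^ 2),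
        ← hQdef, mul_div_assoc, Real.div_sqrt]
    rw [← heval]
    exact key
end

section
/- Let $f$ be a submodular set function on a finite set $N$ with $f(\emptyset) = 0$, and let $(j_1, \dots, j_n)$ be any ordering (permutation) of $N$. Define $S_k = \{j_1, \dots, j_k\}$, $S_0 = \emptyset$, and $\pi_{j_k} = f(S_k) - f(S_{k-1})$. Then $\pi \in \Pi_f$, i.e., $\sum_{j \in S} \pi_j \leq f(S)$ for every $S \subseteq N$. -/
theorem greedy_vector_mem_submodular_polyhedron (n : ℕ) (f : Finset (Fin n) → ℝ)
    (hf0 : f ∅ = 0)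
    (hsub : ∀ S T : Finset (Fin n), S ⊆ T → ∀ j ∉ T,
      f (insert j T) - f T ≤ f (insert j S) - f S)
    (r : Fin n ≃ Fin n) (π : Fin n → ℝ)
    (hπ : ∀ j : Fin n,
      π j = f (Finset.univ.filter (fun i => (r i : ℕ) < (r j : ℕ) + 1)) -
            f (Finset.univ.filter (fun i => (r i : ℕ) < (r j : ℕ)))) :
    ∀ S : Finset (Fin n), ∑ j ∈ S, π j ≤ f S := by
  intro S
  induction S using Finset.strongInduction with
  | _ S ih =>
    rcases S.eq_empty_or_nonempty with rfl | hS
    · simp [hf0]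
    · obtain ⟨j, hjS, hmax⟩ := S.exists_max_image (fun i => ((r i : ℕ) : ℕ)) hS
      have hins : insert j (Finset.univ.filter fun i => (r i : ℕ) < (r j : ℕ)) =
          Finset.univ.filter fun i => (r i : ℕ) < (r j : ℕ) + 1 := by
        ext i
        simp only [Finset.mem_insert, Finset.mem_filter, Finset.mem_univ, true_and]
        constructor
        · rintro (rfl | h) <;> omega
        · intro h
          rcases Nat.lt_succ_iff_lt_or_eq.mp h with h | h
          · right; exact h
          · left; exact r.injective (Fin.ext h)
      have hsubset : S.erase j ⊆ Finset.univ.filter fun i => (r i : ℕ) < (r j : ℕ) := by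
        intro i hi
        simp only [Finset.mem_filter, Finset.mem_univ, true_and]
        have hi' := Finset.mem_of_mem_erase hi
        have hne := Finset.ne_of_mem_erase hi
        rcases lt_or_eq_of_le (hmax i hi') with h | h
        · exact h
        · exact absurd (r.injective (Fin.ext h)) hne
      have hjnot : j ∉ Finset.univ.filter fun i => (r i : ℕ) < (r j : ℕ) := by
        simp
      have key := hsub (S.erase j) _ hsubset j hjnot
      rw [hins, Finset.insert_erase hjS] at key
      have hπj : π j ≤ f S - f (S.erase j) := by rw [hπ j]; exact key
      have ih' := ih (S.erase j) (Finset.erase_ssubset hjS)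
      have hsum : ∑ i ∈ S.erase j, π i + π j = ∑ i ∈ S, π i :=
        Finset.sum_erase_add _ _ hjS
      linarith
end

section
/- With $\underline{\pi}_j = \bar{a}_j + c(\sqrt{\sum_{i\in N}\sigma_i^2} - \sqrt{\sum_{i\neq j}\sigma_i^2})$ and $\bar{\pi}_j = \bar{a}_j + c\sigma_j$, where $\bar{a}_j, \sigma_j \geq 0$ and $c \geq 0$: for every binary vector $x \in \{0,1\}^n$, $\sum_j \underline{\pi}_j x_j \leq \sum_j \bar{a}_j x_j + c\sqrt{\sum_j \sigma_j^2 x_j^2} \leq \sum_j \bar{\pi}_j x_j$. -/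
theorem socp_value_between_interval_endpoints (n : ℕ) (abar σ : Fin n → ℝ) (c : ℝ)
    (ha : ∀ j, 0 ≤ abar j) (hσ : ∀ j, 0 ≤ σ j) (hc : 0 ≤ c)
    (x : Fin n → ℝ) (hx : ∀ j, x j = 0 ∨ x j = 1) :
    (∑ j, (abar j + c * (Real.sqrt (∑ i, σ i ^ 2) -
        Real.sqrt (∑ i ∈ Finset.univ.erase j, σ i ^ 2))) * x j ≤
      (∑ j, abar j * x j) + c * Real.sqrt (∑ j, σ j ^ 2 * x j ^ 2)) ∧
    ((∑ j, abar j * x j) + c * Real.sqrt (∑ j, σ j ^ 2 * x j ^ 2) ≤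
      ∑ j, (abar j + c * σ j) * x j) := by
  have hx01 : ∀ j, 0 ≤ x j ∧ x j ≤ 1 := by
    intro j; rcases hx j with h | h <;> simp [h]
  have hxsq : ∀ j, x j ^ 2 = x j := by
    intro j; rcases hx j with h | h <;> simp [h]
  set S := ∑ i, σ i ^ 2 with hS
  set T := ∑ j, σ j ^ 2 * x j ^ 2 with hT
  have hSnn : 0 ≤ S := Finset.sum_nonneg fun i _ => sq_nonneg _
  have hTnn : 0 ≤ T := Finset.sum_nonneg fun i _ => mul_nonneg (sq_nonneg _) (sq_nonneg _)
  have hTS : T ≤ S := by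
    apply Finset.sum_le_sum
    intro i _
    calc σ i ^ 2 * x i ^ 2 ≤ σ i ^ 2 * 1 := by
          apply mul_le_mul_of_nonneg_left _ (sq_nonneg _)
          rw [hxsq]; exact (hx01 i).2
      _ = σ i ^ 2 := mul_one _
  have herase : ∀ j, ∑ i ∈ Finset.univ.erase j, σ i ^ 2 = S - σ j ^ 2 := by
    intro j
    rw [hS, Finset.sum_erase_eq_sub (Finset.mem_univ j)]
  have hjS : ∀ j, σ j ^ 2 ≤ S :=
    fun j => Finset.single_le_sum (f := fun i => σ i ^ 2) (fun i _ => sq_nonneg _)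
      (Finset.mem_univ j)
  constructor
  · -- lower bound
    have key : ∑ j, (Real.sqrt S - Real.sqrt (S - σ j ^ 2)) * x j ≤ Real.sqrt T := by
      by_cases hS0 : S = 0
      · have hall : ∀ i ∈ (Finset.univ : Finset (Fin n)), σ i ^ 2 = 0 :=
          (Finset.sum_eq_zero_iff_of_nonneg (fun i _ => sq_nonneg (σ i))).mp
            (hS.symm.trans hS0)
        have : ∀ j, (Real.sqrt S - Real.sqrt (S - σ j ^ 2)) * x j = 0 := by
          intro j
          rw [hS0, hall j (Finset.mem_univ j)]
          simp
        rw [Finset.sum_congr rfl fun j _ => this j, Finset.sum_const_zero]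
        exact Real.sqrt_nonneg _
      · have hSpos : 0 < S := lt_of_le_of_ne hSnn (Ne.symm hS0)
        have hsqSpos : 0 < Real.sqrt S := Real.sqrt_pos.mpr hSpos
        have term : ∀ j, (Real.sqrt S - Real.sqrt (S - σ j ^ 2)) * x j
            ≤ (σ j ^ 2 / Real.sqrt S) * x j := by
          intro j
          apply mul_le_mul_of_nonneg_right _ (hx01 j).1
          rw [sub_le_iff_le_add, div_add' _ _ _ (ne_of_gt hsqSpos),
            le_div_iff₀ hsqSpos]
          have h1 : S - σ j ^ 2 ≤ Real.sqrt (S - σ j ^ 2) * Real.sqrt S := by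
            have h2 : Real.sqrt (S - σ j ^ 2) ≤ Real.sqrt S :=
              Real.sqrt_le_sqrt (by linarith [sq_nonneg (σ j)])
            calc S - σ j ^ 2 = Real.sqrt (S - σ j ^ 2) * Real.sqrt (S - σ j ^ 2) :=
                  (Real.mul_self_sqrt (by linarith [hjS j])).symm
              _ ≤ Real.sqrt (S - σ j ^ 2) * Real.sqrt S :=
                  mul_le_mul_of_nonneg_left h2 (Real.sqrt_nonneg _)
          have h3 : Real.sqrt S * Real.sqrt S = S := Real.mul_self_sqrt hSnn
          nlinarith
        calc ∑ j, (Real.sqrt S - Real.sqrt (S - σ j ^ 2)) * x j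
            ≤ ∑ j, (σ j ^ 2 / Real.sqrt S) * x j :=
              Finset.sum_le_sum fun j _ => term j
          _ = T / Real.sqrt S := by
              rw [hT, Finset.sum_div]
              exact Finset.sum_congr rfl fun j _ => by rw [hxsq]; ring
          _ ≤ Real.sqrt T := by
              rw [div_le_iff₀ hsqSpos]
              calc T = Real.sqrt T * Real.sqrt T := (Real.mul_self_sqrt hTnn).symm
                _ ≤ Real.sqrt T * Real.sqrt S :=
                    mul_le_mul_of_nonneg_left (Real.sqrt_le_sqrt hTS) (Real.sqrt_nonneg _)
    calc ∑ j, (abar j + c * (Real.sqrt S - Real.sqrt (∑ i ∈ Finset.univ.erase j, σ i ^ 2))) * x j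
        = (∑ j, abar j * x j) + c * ∑ j, (Real.sqrt S - Real.sqrt (S - σ j ^ 2)) * x j := by
          rw [Finset.mul_sum, ← Finset.sum_add_distrib]
          exact Finset.sum_congr rfl fun j _ => by rw [herase j]; ring
      _ ≤ (∑ j, abar j * x j) + c * Real.sqrt T := by
          have := mul_le_mul_of_nonneg_left key hc
          linarith
  · -- upper bound
    have hsq : Real.sqrt T ≤ ∑ j, σ j * x j := by
      have h1 : T ≤ (∑ j, σ j * x j) ^ 2 := by
        calc T = ∑ j, (σ j * x j) ^ 2 :=
              Finset.sum_congr rfl fun j _ => by ring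
          _ ≤ (∑ j, σ j * x j) ^ 2 :=
              Finset.sum_sq_le_sq_sum_of_nonneg fun j _ =>
                mul_nonneg (hσ j) (hx01 j).1
      calc Real.sqrt T ≤ Real.sqrt ((∑ j, σ j * x j) ^ 2) := Real.sqrt_le_sqrt h1
        _ = ∑ j, σ j * x j := Real.sqrt_sq
            (Finset.sum_nonneg fun j _ => mul_nonneg (hσ j) (hx01 j).1)
    calc (∑ j, abar j * x j) + c * Real.sqrt T
        ≤ (∑ j, abar j * x j) + c * ∑ j, σ j * x j := by
          have := mul_le_mul_of_nonneg_left hsq hc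
          linarith
      _ = ∑ j, (abar j + c * σ j) * x j := by
          rw [Finset.mul_sum, ← Finset.sum_add_distrib]
          exact Finset.sum_congr rfl fun j _ => by ring
end
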